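/- Let X = W ⊕_a Z be the absolute sum of real Banach spaces W and Z with respect to an absolute norm N which is of type 1 or of type ∞ (so W is an absolute summand of X of type 1 or ∞). If W ⊕_a Z has the weak BPBp-nu for compact operators, then W has the weak BPBp-nu for compact operators. -/

import Mathlib

open Filter Topology

/-- `N` is an absolute norm on `ℝ²`: a norm with `N(1,0)=N(0,1)=1` and
`N(s,t)=N(|s|,|t|)`. -/
structure IsAbsoluteNorm (N : ℝ → ℝ → ℝ) : Prop where
  nonneg : ∀ s t : ℝ, 0 ≤ N s t
  eq_zero_iff : ∀ s t : ℝ, N s t = 0 ↔ s = 0 ∧ t = 0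
  triangle : ∀ s₁ t₁ s₂ t₂ : ℝ, N (s₁ + s₂) (t₁ + t₂) ≤ N s₁ t₁ + N s₂ t₂
  smul : ∀ c s t : ℝ, N (c * s) (c * t) = |c| * N s t
  one_zero : N 1 0 = 1
  zero_one : N 0 1 = 1
  abs_eq : ∀ s t : ℝ, N s t = N |s| |t|

/-- An absolute norm is of type 1 if `|x| + K|y| ≤ N(x,y)` for some `K > 0`. -/
def AbsNormTypeOne (N : ℝ → ℝ → ℝ) : Prop :=
  ∃ K : ℝ, 0 < K ∧ ∀ x y : ℝ, |x| + K * |y| ≤ N x y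

/-- An absolute norm is of type ∞ if `N(1,b₀) = 1` for some `b₀ > 0`. -/
def AbsNormTypeInfty (N : ℝ → ℝ → ℝ) : Prop :=
  ∃ b₀ : ℝ, 0 < b₀ ∧ N 1 b₀ = 1

/-- The numerical radius of a bounded linear operator on `X`:
`v(T) = sup {|x*(T x)| : ‖x‖ = ‖x*‖ = 1, x*(x) = 1}`. -/
noncomputable def NumRadius {X : Type*} [NormedAddCommGroup X] [NormedSpace ℝ X]
    (T : X →L[ℝ] X) : ℝ :=
  sSup {r : ℝ | ∃ (x : X) (f : X →L[ℝ] ℝ),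
    ‖x‖ = 1 ∧ ‖f‖ = 1 ∧ f x = 1 ∧ r = |f (T x)|}

/-- `X` has the weak Bishop–Phelps–Bollobás property for numerical radius for
compact operators. -/
def HasWeakBPBnuCompact (X : Type*) [NormedAddCommGroup X] [NormedSpace ℝ X] : Prop :=
  ∀ ε : ℝ, 0 < ε → ∃ η : ℝ, 0 < η ∧
    ∀ (T : X →L[ℝ] X) (x : X) (f : X →L[ℝ] ℝ), IsCompactOperator (⇑T) →
      NumRadius T = 1 → ‖x‖ = 1 → ‖f‖ = 1 → f x = 1 → 1 - η < |f (T x)| →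
      ∃ (S : X →L[ℝ] X) (x₀ : X) (f₀ : X →L[ℝ] ℝ), IsCompactOperator (⇑S) ∧
        ‖x₀‖ = 1 ∧ ‖f₀‖ = 1 ∧ f₀ x₀ = 1 ∧
        |f₀ (S x₀)| = NumRadius S ∧ ‖f₀ - f‖ < ε ∧ ‖x₀ - x‖ < ε ∧ ‖S - T‖ < ε

/-!
Lift `T` to `e.inl ∘ T ∘ e.fst` on `X`. Since `N` is absolute, every state `(u, g)` of `X`
yields a functional `g ∘ e.inl` that attains its norm at `e.fst u`, so the lift has the same
numerical radius as `T`. The property of `X` gives an approximation `(S, x₀, g₀)`, which we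
compress back to `W` as `q ∘ S ∘ j` for a pair of contractions with `q ∘ j = id`,
`j (e.fst x₀) = x₀` and `g₀ ∘ j ∘ q = g₀`; compressions do not increase the numerical radius.
For type 1, `(1, 0)` is a vertex of the unit ball of `N`, which forces `x₀ ∈ W`: take
`j = e.inl` and add to `e.fst` the rank-one map `y ↦ g₀ (e.inr (e.snd y)) • e.fst x₀`.
For type ∞, `N (1, ·)` is flat near `0`, which forces `g₀` to vanish on `Z`: take `q = e.fst`
and tilt `e.inl` to `w ↦ e.inl w + e.inr (g₀ (e.inl w) • e.snd x₀)`.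
-/

namespace IsAbsoluteNorm

variable {N : ℝ → ℝ → ℝ}

lemma swap (hN : IsAbsoluteNorm N) : IsAbsoluteNorm fun s t => N t s where
  nonneg s t := hN.nonneg t s
  eq_zero_iff s t := (hN.eq_zero_iff t s).trans and_comm
  triangle s₁ t₁ s₂ t₂ := hN.triangle t₁ s₁ t₂ s₂
  smul c s t := hN.smul c t s
  one_zero := hN.zero_one
  zero_one := hN.one_zero
  abs_eq s t := hN.abs_eq t s

lemma apply_zero (hN : IsAbsoluteNorm N) (s : ℝ) : N s 0 = |s| := by
  simpa [hN.one_zero] using hN.smul s 1 0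

lemma abs_left (hN : IsAbsoluteNorm N) (s t : ℝ) : N |s| t = N s t := by
  rw [hN.abs_eq s t, hN.abs_eq |s| t, abs_abs]

lemma neg_left (hN : IsAbsoluteNorm N) (s t : ℝ) : N (-s) t = N s t := by
  rw [← hN.abs_left, abs_neg, hN.abs_left]

lemma convex_comb (hN : IsAbsoluteNorm N) {a b : ℝ} (ha : 0 ≤ a) (hb : 0 ≤ b)
    (s₁ t₁ s₂ t₂ : ℝ) :
    N (a * s₁ + b * s₂) (a * t₁ + b * t₂) ≤ a * N s₁ t₁ + b * N s₂ t₂ := by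
  have := hN.triangle (a * s₁) (a * t₁) (b * s₂) (b * t₂)
  rwa [hN.smul, hN.smul, abs_of_nonneg ha, abs_of_nonneg hb] at this

lemma mono_left (hN : IsAbsoluteNorm N) (t : ℝ) {s s' : ℝ} (h : |s| ≤ |s'|) :
    N s t ≤ N s' t := by
  rw [← hN.abs_left s']
  generalize |s'| = a at h ⊢
  obtain ha | ha := ((abs_nonneg s).trans h).eq_or_lt
  · rw [← ha, abs_eq_zero.1 (le_antisymm (ha ▸ h) (abs_nonneg s))]
  -- `(s, t)` is a convex combination of `(a, t)` and `(-a, t)`.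
  have key : 2 * a * N s t ≤ 2 * a * N a t := calc
    2 * a * N s t = N ((a + s) * a + (a - s) * -a) ((a + s) * t + (a - s) * t) := by
      rw [← abs_of_pos (by positivity : 0 < 2 * a), ← hN.smul]
      congr 1 <;> ring
    _ ≤ (a + s) * N a t + (a - s) * N (-a) t :=
      hN.convex_comb (by linarith [neg_abs_le s]) (by linarith [le_abs_self s]) _ _ _ _
    _ = 2 * a * N a t := by rw [hN.neg_left]; ring
  exact le_of_mul_le_mul_left key (by positivity)

lemma mono_right (hN : IsAbsoluteNorm N) (s : ℝ) {t t' : ℝ} (h : |t| ≤ |t'|) :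
    N s t ≤ N s t' :=
  hN.swap.mono_left s h

lemma mono (hN : IsAbsoluteNorm N) {s s' t t' : ℝ} (hs : |s| ≤ |s'|) (ht : |t| ≤ |t'|) :
    N s t ≤ N s' t' :=
  (hN.mono_left t hs).trans (hN.mono_right s' ht)

lemma abs_left_le (hN : IsAbsoluteNorm N) (s t : ℝ) : |s| ≤ N s t := by
  simpa [hN.apply_zero] using hN.mono_right s (t := 0) (t' := t) (by simp)

lemma abs_right_le (hN : IsAbsoluteNorm N) (s t : ℝ) : |t| ≤ N s t :=
  hN.swap.abs_left_le t s

lemma le_of_abs_le_mul (hN : IsAbsoluteNorm N) {a b c : ℝ} (hb : N 1 b = 1) (ha : 0 ≤ a)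
    (hc : |c| ≤ a * |b|) : N a c ≤ a := calc
  N a c ≤ N (a * 1) (a * b) := by
    rw [mul_one]; exact hN.mono_right a (by rwa [abs_mul, abs_of_nonneg ha])
  _ = a := by rw [hN.smul, hb, abs_of_nonneg ha, mul_one]

end IsAbsoluteNorm

section NumRadius

variable {X : Type*} [NormedAddCommGroup X] [NormedSpace ℝ X]

lemma ContinuousLinearMap.apply_le_norm_mul_norm (f : X →L[ℝ] ℝ) (x : X) : f x ≤ ‖f‖ * ‖x‖ :=
  (le_abs_self _).trans (f.le_opNorm x)

lemma ContinuousLinearMap.norm_le_of_forall_apply_le {f : X →L[ℝ] ℝ} {c : ℝ}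
    (h : ∀ x, ‖x‖ ≤ 1 → f x ≤ c) : ‖f‖ ≤ c := by
  have hc : 0 ≤ c := by simpa using h 0 (by simp)
  refine f.opNorm_le_of_unit_norm hc fun x hx => abs_le.2 ⟨?_, h x hx.le⟩
  have := h (-x) (by simp [hx])
  rw [map_neg] at this
  linarith

lemma ContinuousLinearMap.apply_eq_norm_mul_norm_of_forall_le {f : X →L[ℝ] ℝ} {u : X}
    (h : ∀ w, ‖w‖ ≤ ‖u‖ → f w ≤ f u) : f u = ‖f‖ * ‖u‖ := by
  refine le_antisymm (f.apply_le_norm_mul_norm u) ?_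
  have : ‖‖u‖ • f‖ ≤ f u := norm_le_of_forall_apply_le fun w hw => by
    simpa using h (‖u‖ • w)
      (by rw [norm_smul, norm_norm]; exact mul_le_of_le_one_right (norm_nonneg _) hw)
  rwa [norm_smul, norm_norm, mul_comm] at this

/-- `(x, f) ∈ Π(X)`. -/
def IsNormingPair (x : X) (f : X →L[ℝ] ℝ) : Prop :=
  ‖x‖ = 1 ∧ ‖f‖ = 1 ∧ f x = 1

lemma isNormingPair_of_norm_le {x : X} {f : X →L[ℝ] ℝ} (hx : ‖x‖ = 1) (hf : ‖f‖ ≤ 1)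
    (hfx : f x = 1) : IsNormingPair x f :=
  ⟨hx, le_antisymm hf (by simpa [hx, hfx] using f.le_opNorm x), hfx⟩

lemma le_numRadius (T : X →L[ℝ] X) {x : X} {f : X →L[ℝ] ℝ} (h : IsNormingPair x f) :
    |f (T x)| ≤ NumRadius T := by
  refine le_csSup ⟨‖T‖, ?_⟩ ⟨x, f, h.1, h.2.1, h.2.2, rfl⟩
  rintro _ ⟨y, g, hy, hg, -, rfl⟩
  calc |g (T y)| ≤ ‖g‖ * ‖T y‖ := g.le_opNorm _
    _ ≤ ‖T‖ := by simpa [hg, hy] using T.le_opNorm y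

lemma numRadius_le (T : X →L[ℝ] X) {c : ℝ} (hc : 0 ≤ c)
    (h : ∀ x f, IsNormingPair x f → |f (T x)| ≤ c) : NumRadius T ≤ c :=
  Real.sSup_le (by rintro _ ⟨x, f, hx, hf, hfx, rfl⟩; exact h x f ⟨hx, hf, hfx⟩) hc

lemma numRadius_nonneg (T : X →L[ℝ] X) : 0 ≤ NumRadius T :=
  Real.sSup_nonneg (by rintro _ ⟨x, f, -, -, -, rfl⟩; exact abs_nonneg _)

lemma abs_apply_le_numRadius_of_apply_eq (T : X →L[ℝ] X) {x : X} {f : X →L[ℝ] ℝ}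
    (hfx : f x = ‖f‖ * ‖x‖) : |f (T x)| ≤ ‖f‖ * ‖x‖ * NumRadius T := by
  rcases eq_or_ne f 0 with rfl | hf
  · simp
  rcases eq_or_ne x 0 with rfl | hx
  · simp
  have hf' : 0 < ‖f‖ := norm_pos_iff.2 hf
  have hx' : 0 < ‖x‖ := norm_pos_iff.2 hx
  have hpair : IsNormingPair (‖x‖⁻¹ • x) (‖f‖⁻¹ • f) := by
    refine ⟨by simp [norm_smul, hx'.ne'], by simp [norm_smul, hf'.ne'], ?_⟩
    simp only [map_smul, smul_apply, hfx, smul_eq_mul]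
    field_simp
  have := le_numRadius T hpair
  simp only [smul_apply, map_smul, smul_eq_mul, abs_mul, abs_inv, abs_norm] at this
  calc |f (T x)| = ‖f‖ * ‖x‖ * (‖x‖⁻¹ * (‖f‖⁻¹ * |f (T x)|)) := by field_simp
    _ ≤ ‖f‖ * ‖x‖ * NumRadius T := by gcongr

def IsBPBnuApprox (ε : ℝ) (T : X →L[ℝ] X) (x : X) (f : X →L[ℝ] ℝ) (S : X →L[ℝ] X) (x₀ : X)
    (f₀ : X →L[ℝ] ℝ) : Prop :=
  IsCompactOperator (⇑S) ∧ ‖x₀‖ = 1 ∧ ‖f₀‖ = 1 ∧ f₀ x₀ = 1 ∧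
    |f₀ (S x₀)| = NumRadius S ∧ ‖f₀ - f‖ < ε ∧ ‖x₀ - x‖ < ε ∧ ‖S - T‖ < ε

lemma IsBPBnuApprox.mono {ε ε' : ℝ} {T S : X →L[ℝ] X} {x x₀ : X} {f f₀ : X →L[ℝ] ℝ}
    (h : IsBPBnuApprox ε T x f S x₀ f₀) (hε : ε ≤ ε') : IsBPBnuApprox ε' T x f S x₀ f₀ := by
  obtain ⟨hS, hx₀, hf₀, hf₀x₀, hatt, hf, hx, hT⟩ := h
  exact ⟨hS, hx₀, hf₀, hf₀x₀, hatt, hf.trans_le hε, hx.trans_le hε, hT.trans_le hε⟩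

end NumRadius

section OneComplemented

variable {W X : Type*} [NormedAddCommGroup W] [NormedSpace ℝ W]
  [NormedAddCommGroup X] [NormedSpace ℝ X]

/-- `j ∘ q` is a norm-one projection of `X` onto an isometric copy of `W`. -/
structure IsOneComplemented (j : W →L[ℝ] X) (q : X →L[ℝ] W) : Prop where
  left_inv : ∀ w, q (j w) = w
  norm_proj_le : ‖q‖ ≤ 1
  norm_embed_le : ‖j‖ ≤ 1

namespace IsOneComplemented

variable {j : W →L[ℝ] X} {q : X →L[ℝ] W}

lemma norm_proj_apply_le (h : IsOneComplemented j q) (y : X) : ‖q y‖ ≤ ‖y‖ :=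
  (q.le_of_opNorm_le h.norm_proj_le y).trans_eq (one_mul _)

lemma norm_map (h : IsOneComplemented j q) (w : W) : ‖j w‖ = ‖w‖ :=
  le_antisymm ((j.le_of_opNorm_le h.norm_embed_le w).trans_eq (one_mul _))
    (by simpa [h.left_inv] using h.norm_proj_apply_le (j w))

lemma norm_comp_embed_le (h : IsOneComplemented j q) (g : X →L[ℝ] ℝ) : ‖g ∘L j‖ ≤ ‖g‖ :=
  (g.opNorm_comp_le j).trans (mul_le_of_le_one_right (norm_nonneg g) h.norm_embed_le)

lemma norm_compress_le (h : IsOneComplemented j q) (A : X →L[ℝ] X) : ‖q ∘L A ∘L j‖ ≤ ‖A‖ :=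
  calc ‖q ∘L A ∘L j‖ ≤ ‖q‖ * (‖A‖ * ‖j‖) :=
        (q.opNorm_comp_le _).trans (by gcongr; exact A.opNorm_comp_le j)
    _ ≤ 1 * (‖A‖ * 1) := by gcongr; exacts [h.norm_proj_le, h.norm_embed_le]
    _ = ‖A‖ := by ring

lemma isNormingPair_map (h : IsOneComplemented j q) {x : W} {f : W →L[ℝ] ℝ}
    (hxf : IsNormingPair x f) : IsNormingPair (j x) (f ∘L q) :=
  isNormingPair_of_norm_le (by rw [h.norm_map, hxf.1])
    ((f.opNorm_comp_le q).trans (by rw [hxf.2.1, one_mul]; exact h.norm_proj_le))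
    (by simp [h.left_inv, hxf.2.2])

lemma numRadius_compress_le (h : IsOneComplemented j q) (S : X →L[ℝ] X) :
    NumRadius (q ∘L S ∘L j) ≤ NumRadius S :=
  numRadius_le _ (numRadius_nonneg S) fun _ _ hxf => le_numRadius S (h.isNormingPair_map hxf)

end IsOneComplemented

lemma IsBPBnuApprox.compress {ι j : W →L[ℝ] X} {π q : X →L[ℝ] W}
    (hιπ : IsOneComplemented ι π) (hjq : IsOneComplemented j q) (hqι : ∀ w, q (ι w) = w)
    (hπj : ∀ w, π (j w) = w) {ε : ℝ} {T : W →L[ℝ] W} {x : W} {f : W →L[ℝ] ℝ}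
    {S : X →L[ℝ] X} {x₀ : X} {g₀ : X →L[ℝ] ℝ}
    (h : IsBPBnuApprox ε (ι ∘L T ∘L π) (ι x) (f ∘L π) S x₀ g₀) (hx₀ : j (π x₀) = x₀)
    (hg₀ : ∀ y, g₀ (j (q y)) = g₀ y) :
    IsBPBnuApprox ε T x f (q ∘L S ∘L j) (π x₀) (g₀ ∘L j) := by
  obtain ⟨hS, hx₀n, hg₀n, hg₀x₀, hatt, hgf, hxx, hST⟩ := h
  have hpair : IsNormingPair (π x₀) (g₀ ∘L j) :=
    isNormingPair_of_norm_le (by rw [← hjq.norm_map, hx₀, hx₀n])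
      ((hjq.norm_comp_embed_le g₀).trans hg₀n.le) (by simp [hx₀, hg₀x₀])
  refine ⟨(hS.comp_clm j).clm_comp q, hpair.1, hpair.2.1, hpair.2.2,
    le_antisymm (le_numRadius _ hpair) ?_, ?_, ?_, ?_⟩
  · calc NumRadius (q ∘L S ∘L j) ≤ NumRadius S := hjq.numRadius_compress_le S
      _ = _ := by simp [← hatt, hg₀, hx₀]
  · calc ‖g₀ ∘L j - f‖ = ‖(g₀ - f ∘L π) ∘L j‖ := by congr 1; ext; simp [hπj]
      _ ≤ ‖g₀ - f ∘L π‖ := hjq.norm_comp_embed_le _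
      _ < ε := hgf
  · calc ‖π x₀ - x‖ = ‖π (x₀ - ι x)‖ := by rw [map_sub, hιπ.left_inv]
      _ ≤ ‖x₀ - ι x‖ := hιπ.norm_proj_apply_le _
      _ < ε := hxx
  · calc ‖q ∘L S ∘L j - T‖ = ‖q ∘L (S - ι ∘L T ∘L π) ∘L j‖ := by
          congr 1; ext; simp [hqι, hπj]
      _ ≤ ‖S - ι ∘L T ∘L π‖ := hjq.norm_compress_le _
      _ < ε := hST

end OneComplemented

section AbsoluteSum

variable {W Z X : Type*} [NormedAddCommGroup W] [NormedSpace ℝ W]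
  [NormedAddCommGroup Z] [NormedSpace ℝ Z] [NormedAddCommGroup X] [NormedSpace ℝ X]

namespace ContinuousLinearEquiv

variable (e : X ≃L[ℝ] W × Z)

def inl : W →L[ℝ] X := (e.symm : W × Z →L[ℝ] X) ∘L ContinuousLinearMap.inl ℝ W Z

def inr : Z →L[ℝ] X := (e.symm : W × Z →L[ℝ] X) ∘L ContinuousLinearMap.inr ℝ W Z

def fst : X →L[ℝ] W := ContinuousLinearMap.fst ℝ W Z ∘L (e : X →L[ℝ] W × Z)

def snd : X →L[ℝ] Z := ContinuousLinearMap.snd ℝ W Z ∘L (e : X →L[ℝ] W × Z)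

@[simp] lemma fst_inl (w : W) : e.fst (e.inl w) = w := by simp [fst, inl]

@[simp] lemma snd_inl (w : W) : e.snd (e.inl w) = 0 := by simp [snd, inl]

@[simp] lemma fst_inr (z : Z) : e.fst (e.inr z) = 0 := by simp [fst, inr]

@[simp] lemma snd_inr (z : Z) : e.snd (e.inr z) = z := by simp [snd, inr]

lemma inl_add_inr (w : W) (z : Z) : e.inl w + e.inr z = e.symm (w, z) := by
  simp [inl, inr, ← map_add]

@[simp] lemma inl_fst_add_inr_snd (x : X) : e.inl (e.fst x) + e.inr (e.snd x) = x := by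
  simp [inl_add_inr, fst, snd]

lemma apply_eq_comp_inl_add_comp_inr (g : X →L[ℝ] ℝ) (x : X) :
    g x = (g ∘L e.inl) (e.fst x) + (g ∘L e.inr) (e.snd x) := by
  conv_lhs => rw [← e.inl_fst_add_inr_snd x]
  exact g.map_add _ _

lemma one_le_norm_comp_mul_norm_add {x₀ : X} {g₀ : X →L[ℝ] ℝ} (h : IsNormingPair x₀ g₀) :
    1 ≤ ‖g₀ ∘L e.inl‖ * ‖e.fst x₀‖ + ‖g₀ ∘L e.inr‖ * ‖e.snd x₀‖ := calc
  1 = (g₀ ∘L e.inl) (e.fst x₀) + (g₀ ∘L e.inr) (e.snd x₀) := by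
    rw [← e.apply_eq_comp_inl_add_comp_inr, h.2.2]
  _ ≤ _ := add_le_add (ContinuousLinearMap.apply_le_norm_mul_norm _ _)
    (ContinuousLinearMap.apply_le_norm_mul_norm _ _)

end ContinuousLinearEquiv

/-- `X = W ⊕_N Z` via `e`. -/
structure IsAbsoluteSum (N : ℝ → ℝ → ℝ) (e : X ≃L[ℝ] W × Z) : Prop where
  absoluteNorm : IsAbsoluteNorm N
  norm_eq : ∀ x, ‖x‖ = N ‖(e x).1‖ ‖(e x).2‖

namespace IsAbsoluteSum

variable {N : ℝ → ℝ → ℝ} {e : X ≃L[ℝ] W × Z}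

lemma norm_eq_fst_snd (hs : IsAbsoluteSum N e) (x : X) : ‖x‖ = N ‖e.fst x‖ ‖e.snd x‖ :=
  hs.norm_eq x

lemma norm_inl_add_inr (hs : IsAbsoluteSum N e) (w : W) (z : Z) :
    ‖e.inl w + e.inr z‖ = N ‖w‖ ‖z‖ := by
  simp [hs.norm_eq_fst_snd]

lemma norm_inr (hs : IsAbsoluteSum N e) (z : Z) : ‖e.inr z‖ = ‖z‖ := by
  simpa [hs.absoluteNorm.swap.apply_zero] using hs.norm_inl_add_inr 0 z

lemma norm_snd_le (hs : IsAbsoluteSum N e) (x : X) : ‖e.snd x‖ ≤ ‖x‖ := by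
  simpa [← hs.norm_eq_fst_snd] using hs.absoluteNorm.abs_right_le ‖e.fst x‖ ‖e.snd x‖

lemma isOneComplemented_inl (hs : IsAbsoluteSum N e) : IsOneComplemented e.inl e.fst where
  left_inv := e.fst_inl
  norm_proj_le := e.fst.opNorm_le_bound zero_le_one fun x => by
    simpa [← hs.norm_eq_fst_snd] using hs.absoluteNorm.abs_left_le ‖e.fst x‖ ‖e.snd x‖
  norm_embed_le := e.inl.opNorm_le_bound zero_le_one fun w => by
    simpa [hs.absoluteNorm.apply_zero] using (hs.norm_inl_add_inr w 0).le

lemma norm_snd_le_norm_sub_inl (hs : IsAbsoluteSum N e) (x₀ : X) (x : W) :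
    ‖e.snd x₀‖ ≤ ‖x₀ - e.inl x‖ := by
  simpa using hs.norm_snd_le (x₀ - e.inl x)

lemma norm_comp_inr_le_norm_sub (hs : IsAbsoluteSum N e) (g : X →L[ℝ] ℝ) (f : W →L[ℝ] ℝ) :
    ‖g ∘L e.inr‖ ≤ ‖g - f ∘L e.fst‖ :=
  ContinuousLinearMap.opNorm_le_bound _ (norm_nonneg _) fun z => by
    simpa [hs.norm_inr] using (g - f ∘L e.fst).le_opNorm (e.inr z)

lemma apply_eq_norm_mul_norm_fst (hs : IsAbsoluteSum N e) {u : X} {g : X →L[ℝ] ℝ}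
    (h : IsNormingPair u g) : (g ∘L e.inl) (e.fst u) = ‖g ∘L e.inl‖ * ‖e.fst u‖ := by
  refine ContinuousLinearMap.apply_eq_norm_mul_norm_of_forall_le fun w hw => ?_
  have hle : g (e.inl w + e.inr (e.snd u)) ≤ 1 := calc
    _ ≤ ‖g‖ * ‖e.inl w + e.inr (e.snd u)‖ := g.apply_le_norm_mul_norm _
    _ = N ‖w‖ ‖e.snd u‖ := by rw [h.2.1, one_mul, hs.norm_inl_add_inr]
    _ ≤ N ‖e.fst u‖ ‖e.snd u‖ := hs.absoluteNorm.mono_left _ (by simpa using hw)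
    _ = 1 := by rw [← hs.norm_eq_fst_snd, h.1]
  have hu : g (e.inl (e.fst u) + e.inr (e.snd u)) = 1 := by rw [e.inl_fst_add_inr_snd, h.2.2]
  simp only [map_add] at hle hu
  simp only [ContinuousLinearMap.comp_apply]
  linarith

lemma numRadius_lift (hs : IsAbsoluteSum N e) (T : W →L[ℝ] W) :
    NumRadius (e.inl ∘L T ∘L e.fst) = NumRadius T := by
  refine le_antisymm (numRadius_le _ (numRadius_nonneg T) fun u g h => ?_) ?_
  · have hg : ‖g ∘L e.inl‖ ≤ 1 := (hs.isOneComplemented_inl.norm_comp_embed_le g).trans h.2.1.le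
    have hu : ‖e.fst u‖ ≤ 1 := (hs.isOneComplemented_inl.norm_proj_apply_le u).trans h.1.le
    calc |g (e.inl (T (e.fst u)))| ≤ ‖g ∘L e.inl‖ * ‖e.fst u‖ * NumRadius T :=
          abs_apply_le_numRadius_of_apply_eq T (hs.apply_eq_norm_mul_norm_fst h)
      _ ≤ 1 * 1 * NumRadius T := by gcongr; exact numRadius_nonneg T
      _ = NumRadius T := by ring
  · calc NumRadius T = NumRadius (e.fst ∘L (e.inl ∘L T ∘L e.fst) ∘L e.inl) := by
          congr 1; ext; simp
      _ ≤ _ := hs.isOneComplemented_inl.numRadius_compress_le _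

lemma snd_eq_zero_of_typeOne (hs : IsAbsoluteSum N e) {K : ℝ}
    (hK : ∀ a b : ℝ, |a| + K * |b| ≤ N a b) {x₀ : X} {g₀ : X →L[ℝ] ℝ}
    (h : IsNormingPair x₀ g₀) (hg : ‖g₀ ∘L e.inr‖ < K) : e.snd x₀ = 0 := by
  have hvertex : ‖e.fst x₀‖ + K * ‖e.snd x₀‖ ≤ 1 := by
    simpa [← hs.norm_eq_fst_snd, h.1] using hK ‖e.fst x₀‖ ‖e.snd x₀‖
  have hvalue := e.one_le_norm_comp_mul_norm_add h
  have hinl : ‖g₀ ∘L e.inl‖ ≤ 1 := (hs.isOneComplemented_inl.norm_comp_embed_le g₀).trans h.2.1.le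
  have : (K - ‖g₀ ∘L e.inr‖) * ‖e.snd x₀‖ ≤ 0 := by
    nlinarith [norm_nonneg (e.fst x₀)]
  exact norm_le_zero_iff.1 (by nlinarith [norm_nonneg (e.snd x₀)])

lemma isOneComplemented_of_typeOne (hs : IsAbsoluteSum N e) {K : ℝ}
    (hK : ∀ a b : ℝ, |a| + K * |b| ≤ N a b) {w₀ : W} (hw₀ : ‖w₀‖ ≤ 1) {g : Z →L[ℝ] ℝ}
    (hg : ‖g‖ ≤ K) : IsOneComplemented e.inl (e.fst + (g ∘L e.snd).smulRight w₀) where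
  left_inv w := by simp
  norm_proj_le := ContinuousLinearMap.opNorm_le_bound _ zero_le_one fun y => calc
    ‖(e.fst + (g ∘L e.snd).smulRight w₀) y‖ = ‖e.fst y + g (e.snd y) • w₀‖ := rfl
    _ ≤ ‖e.fst y‖ + |g (e.snd y)| * ‖w₀‖ :=
      (norm_add_le _ _).trans_eq (by rw [norm_smul, Real.norm_eq_abs])
    _ ≤ |‖e.fst y‖| + K * |‖e.snd y‖| := by
      rw [abs_norm, abs_norm]
      exact add_le_add le_rfl ((mul_le_of_le_one_right (abs_nonneg _) hw₀).trans
        ((g.le_opNorm _).trans (mul_le_mul_of_nonneg_right hg (norm_nonneg _))))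
    _ ≤ 1 * ‖y‖ := by rw [one_mul, hs.norm_eq_fst_snd y]; exact hK _ _
  norm_embed_le := hs.isOneComplemented_inl.norm_embed_le

lemma exists_bpbnuApprox_of_typeOne (hs : IsAbsoluteSum N e) {K : ℝ}
    (hK : ∀ a b : ℝ, |a| + K * |b| ≤ N a b) {ε : ℝ} (hεK : ε ≤ K) {T : W →L[ℝ] W} {x : W}
    {f : W →L[ℝ] ℝ} {S : X →L[ℝ] X} {x₀ : X} {g₀ : X →L[ℝ] ℝ}
    (h : IsBPBnuApprox ε (e.inl ∘L T ∘L e.fst) (e.inl x) (f ∘L e.fst) S x₀ g₀) :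
    ∃ S₁ x₁ f₁, IsBPBnuApprox ε T x f S₁ x₁ f₁ := by
  have hpair : IsNormingPair x₀ g₀ := ⟨h.2.1, h.2.2.1, h.2.2.2.1⟩
  have hg₂ : ‖g₀ ∘L e.inr‖ < K :=
    ((hs.norm_comp_inr_le_norm_sub g₀ f).trans_lt h.2.2.2.2.2.1).trans_le hεK
  have hx₀ : e.inl (e.fst x₀) = x₀ := by
    simpa [hs.snd_eq_zero_of_typeOne hK hpair hg₂] using e.inl_fst_add_inr_snd x₀
  have hq := hs.isOneComplemented_of_typeOne hK
    ((hs.isOneComplemented_inl.norm_proj_apply_le x₀).trans hpair.1.le) hg₂.le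
  refine ⟨_, _, _, h.compress hs.isOneComplemented_inl hq hq.left_inv e.fst_inl hx₀ fun y => ?_⟩
  have hw₀ : g₀ (e.inl (e.fst x₀)) = 1 := by rw [hx₀, hpair.2.2]
  rw [e.apply_eq_comp_inl_add_comp_inr g₀ y]
  simp [hw₀]

lemma norm_comp_inl_add_mul_norm_comp_inr_le (hs : IsAbsoluteSum N e) {b : ℝ} (hb : N 1 b = 1)
    {g : X →L[ℝ] ℝ} (hg : ‖g‖ ≤ 1) : ‖g ∘L e.inl‖ + |b| * ‖g ∘L e.inr‖ ≤ 1 := by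
  have key : ∀ w z, ‖w‖ ≤ 1 → ‖z‖ ≤ 1 → (g ∘L e.inl) w + b * (g ∘L e.inr) z ≤ 1 :=
    fun w z hw hz => calc
      _ = g (e.inl w + e.inr (b • z)) := by simp
      _ ≤ 1 * N ‖w‖ ‖b • z‖ := (g.apply_le_norm_mul_norm _).trans (by
        rw [hs.norm_inl_add_inr]; exact mul_le_mul_of_nonneg_right hg (hs.absoluteNorm.nonneg _ _))
      _ ≤ N 1 b := by
        rw [one_mul]
        exact hs.absoluteNorm.mono (by simpa using hw)
          (by simpa [norm_smul] using mul_le_of_le_one_right (abs_nonneg b) hz)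
      _ = 1 := hb
  have hinl : ∀ z, ‖z‖ ≤ 1 → ‖g ∘L e.inl‖ ≤ 1 - b * (g ∘L e.inr) z := fun z hz =>
    ContinuousLinearMap.norm_le_of_forall_apply_le fun w hw => by linarith [key w z hw hz]
  have hinr : ‖b • (g ∘L e.inr)‖ ≤ 1 - ‖g ∘L e.inl‖ :=
    ContinuousLinearMap.norm_le_of_forall_apply_le fun z hz => by
      simp only [smul_apply, smul_eq_mul]
      linarith [hinl z hz]
  rw [norm_smul, Real.norm_eq_abs] at hinr
  linarith

lemma comp_inr_eq_zero_of_typeInfty (hs : IsAbsoluteSum N e) {b : ℝ} (hb : N 1 b = 1)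
    {x₀ : X} {g₀ : X →L[ℝ] ℝ} (h : IsNormingPair x₀ g₀) (hz : ‖e.snd x₀‖ < |b|) :
    g₀ ∘L e.inr = 0 := by
  have hdual := hs.norm_comp_inl_add_mul_norm_comp_inr_le hb h.2.1.le
  have hvalue := e.one_le_norm_comp_mul_norm_add h
  have hfst : ‖e.fst x₀‖ ≤ 1 := (hs.isOneComplemented_inl.norm_proj_apply_le x₀).trans h.1.le
  have : ‖g₀ ∘L e.inr‖ * (|b| - ‖e.snd x₀‖) ≤ 0 := by
    nlinarith [norm_nonneg (g₀ ∘L e.inl)]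
  exact norm_le_zero_iff.1 (by nlinarith [norm_nonneg (g₀ ∘L e.inr)])

lemma isOneComplemented_of_typeInfty (hs : IsAbsoluteSum N e) {b : ℝ} (hb : N 1 b = 1)
    {g : W →L[ℝ] ℝ} (hg : ‖g‖ ≤ 1) {z₀ : Z} (hz : ‖z₀‖ ≤ |b|) :
    IsOneComplemented (e.inl + e.inr ∘L g.smulRight z₀) e.fst where
  left_inv w := by simp
  norm_proj_le := hs.isOneComplemented_inl.norm_proj_le
  norm_embed_le := ContinuousLinearMap.opNorm_le_bound _ zero_le_one fun w => by
    rw [one_mul, add_apply, ContinuousLinearMap.comp_apply,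
      ContinuousLinearMap.smulRight_apply, hs.norm_inl_add_inr]
    refine hs.absoluteNorm.le_of_abs_le_mul hb (norm_nonneg w) ?_
    rw [abs_norm, norm_smul, Real.norm_eq_abs]
    exact mul_le_mul ((g.le_opNorm w).trans (mul_le_of_le_one_left (norm_nonneg w) hg)) hz
      (norm_nonneg _) (norm_nonneg _)

lemma exists_bpbnuApprox_of_typeInfty (hs : IsAbsoluteSum N e) {b : ℝ} (hb : N 1 b = 1)
    {ε : ℝ} (hεb : ε ≤ |b|) {T : W →L[ℝ] W} {x : W} {f : W →L[ℝ] ℝ} {S : X →L[ℝ] X} {x₀ : X}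
    {g₀ : X →L[ℝ] ℝ}
    (h : IsBPBnuApprox ε (e.inl ∘L T ∘L e.fst) (e.inl x) (f ∘L e.fst) S x₀ g₀) :
    ∃ S₁ x₁ f₁, IsBPBnuApprox ε T x f S₁ x₁ f₁ := by
  have hpair : IsNormingPair x₀ g₀ := ⟨h.2.1, h.2.2.1, h.2.2.2.1⟩
  have hz₀ : ‖e.snd x₀‖ < |b| :=
    ((hs.norm_snd_le_norm_sub_inl x₀ x).trans_lt h.2.2.2.2.2.2.1).trans_le hεb
  have hinr : ∀ z, g₀ (e.inr z) = 0 := fun z =>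
    ContinuousLinearMap.ext_iff.1 (hs.comp_inr_eq_zero_of_typeInfty hb hpair hz₀) z
  have hg₀ : ∀ y, g₀ (e.inl (e.fst y)) = g₀ y := fun y => by
    simp [e.apply_eq_comp_inl_add_comp_inr g₀ y, hinr]
  have hj := hs.isOneComplemented_of_typeInfty hb
    ((hs.isOneComplemented_inl.norm_comp_embed_le g₀).trans hpair.2.1.le) hz₀.le
  refine ⟨_, _, _, h.compress hs.isOneComplemented_inl hj e.fst_inl hj.left_inv ?_ fun y => ?_⟩
  · simp [hg₀, hpair.2.2]
  · simp [hinr, hg₀]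

end IsAbsoluteSum

end AbsoluteSum

theorem weak_bpbnu_compact_absolute_summand_general (W Z X : Type*)
    [NormedAddCommGroup W] [NormedSpace ℝ W]
    [NormedAddCommGroup Z] [NormedSpace ℝ Z]
    [NormedAddCommGroup X] [NormedSpace ℝ X]
    (N : ℝ → ℝ → ℝ) (hN : IsAbsoluteNorm N)
    (e : X ≃L[ℝ] W × Z) (he : ∀ x : X, ‖x‖ = N ‖(e x).1‖ ‖(e x).2‖)
    (htype : AbsNormTypeOne N ∨ AbsNormTypeInfty N)
    (h : HasWeakBPBnuCompact X) : HasWeakBPBnuCompact W := by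
  have hs : IsAbsoluteSum N e := ⟨hN, he⟩
  obtain ⟨c, hc, hdescent⟩ : ∃ c > 0, ∀ ε ≤ c, ∀ (T : W →L[ℝ] W) x f S x₀ g₀,
      IsBPBnuApprox ε (e.inl ∘L T ∘L e.fst) (e.inl x) (f ∘L e.fst) S x₀ g₀ →
      ∃ S₁ x₁ f₁, IsBPBnuApprox ε T x f S₁ x₁ f₁ := by
    rcases htype with ⟨K, hK, hNK⟩ | ⟨b, hb, hNb⟩
    · exact ⟨K, hK, fun ε hε _ _ _ _ _ _ => hs.exists_bpbnuApprox_of_typeOne hNK hε⟩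
    · exact ⟨b, hb, fun ε hε _ _ _ _ _ _ =>
        hs.exists_bpbnuApprox_of_typeInfty hNb (hε.trans (le_abs_self b))⟩
  intro ε hε
  obtain ⟨η, hη, hX⟩ := h (min ε c) (lt_min hε hc)
  refine ⟨η, hη, fun T x f hT hvT hx hf hfx hTx => ?_⟩
  have hpair : IsNormingPair (e.inl x) (f ∘L e.fst) :=
    hs.isOneComplemented_inl.isNormingPair_map ⟨hx, hf, hfx⟩
  obtain ⟨S, x₀, g₀, happrox⟩ := hX (e.inl ∘L T ∘L e.fst) (e.inl x) (f ∘L e.fst)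
    ((hT.comp_clm e.fst).clm_comp e.inl) (by rw [hs.numRadius_lift, hvT])
    hpair.1 hpair.2.1 hpair.2.2 (by simpa using hTx)
  obtain ⟨S₁, x₁, f₁, happrox₁⟩ := hdescent _ (min_le_right _ _) T x f S x₀ g₀ happrox
  exact ⟨S₁, x₁, f₁, happrox₁.mono (min_le_left _ _)⟩

theorem weak_bpbnu_compact_absolute_summand (W Z X : Type*)
    [NormedAddCommGroup W] [NormedSpace ℝ W] [CompleteSpace W]
    [NormedAddCommGroup Z] [NormedSpace ℝ Z] [CompleteSpace Z]
    [NormedAddCommGroup X] [NormedSpace ℝ X] [CompleteSpace X]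
    (N : ℝ → ℝ → ℝ) (hN : IsAbsoluteNorm N)
    (e : X ≃L[ℝ] W × Z) (he : ∀ x : X, ‖x‖ = N ‖(e x).1‖ ‖(e x).2‖)
    (htype : AbsNormTypeOne N ∨ AbsNormTypeInfty N)
    (h : HasWeakBPBnuCompact X) : HasWeakBPBnuCompact W :=
  weak_bpbnu_compact_absolute_summand_general W Z X N hN e he htype h
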